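/- arXiv:2003.07060 — 2 statements merged into one kernel-verified Lean document; each statement's English description precedes it below -/
import Mathlib

section
/- Suppose each of n agents i has a submodular valuation v_i on subsets of a finite set O of items with v_i(∅) = 0 and subjective binary marginal gains determined by a constant λ_i > 0. Then every clean maximum Nash welfare (MNW) allocation is envy-free up to one good (EF1). -/
/-!
Suppose agent `i` envies agent `j` even after removing any single item from `A j`. Since
`v i (A j) > v i (A i)`, submodularity yields an item `o ∈ A j` whose marginal gain for `i` at `A i`
is `λ i`. Because `A j` is clean, every subset of it is clean, so `v j` counts its items at rate
`λ j`; moving `o` from `j` to `i` thus changes the pair of values from `(a, λ j (k + 1))` to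
`(a + λ i, λ j k)`, where `k = #(A j \ {o})` and `a < v i (A j \ {o}) ≤ λ i k`. This strictly
increases `v i * v j`, and either raises the number of agents with positive value (if `a = 0`)
or the Nash product, contradicting maximality.
-/

/-- An allocation: bundles are pairwise disjoint. -/
def IsAlloc {O : Type*} [DecidableEq O] {n : ℕ} (A : Fin n → Finset O) : Prop :=
  ∀ i j, i ≠ j → Disjoint (A i) (A j)

/-- A clean allocation: every item in every bundle has positive marginal gain. -/
def IsClean {O : Type*} [DecidableEq O] {n : ℕ} (v : Fin n → Finset O → ℝ)
    (A : Fin n → Finset O) : Prop :=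
  ∀ i, ∀ o ∈ A i, 0 < v i (A i) - v i (A i \ {o})

/-- Envy-freeness up to one good. -/
def EF1 {O : Type*} [DecidableEq O] {n : ℕ} (v : Fin n → Finset O → ℝ)
    (A : Fin n → Finset O) : Prop :=
  ∀ i j, v i (A j) ≤ v i (A i) ∨ ∃ o ∈ A j, v i (A j \ {o}) ≤ v i (A i)

/-- The set of agents with positive realized value. -/
noncomputable def posAgents {O : Type*} {n : ℕ} (v : Fin n → Finset O → ℝ)
    (A : Fin n → Finset O) : Finset (Fin n) :=
  Finset.univ.filter fun i => 0 < v i (A i)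

/-- Maximum Nash welfare allocation. -/
def IsMNW {O : Type*} [DecidableEq O] {n : ℕ} (v : Fin n → Finset O → ℝ)
    (A : Fin n → Finset O) : Prop :=
  IsAlloc A ∧
  (∀ B : Fin n → Finset O, IsAlloc B → (posAgents v B).card ≤ (posAgents v A).card) ∧
  (∀ B : Fin n → Finset O, IsAlloc B → (posAgents v B).card = (posAgents v A).card →
    ∏ i ∈ posAgents v B, v i (B i) ≤ ∏ i ∈ posAgents v A, v i (A i))

open Finset

section Valuation

variable {O : Type*} [DecidableEq O] (w : Finset O → ℝ) (lam : ℝ)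

def HasBinaryMarginals : Prop :=
  ∀ (S : Finset O) (o : O), o ∉ S → w (insert o S) - w S = 0 ∨ w (insert o S) - w S = lam

def IsSubmodular : Prop :=
  ∀ S T : Finset O, S ⊆ T → ∀ o ∉ T, w (insert o T) - w T ≤ w (insert o S) - w S

def IsCleanBundle (S : Finset O) : Prop :=
  ∀ o ∈ S, 0 < w S - w (S \ {o})

variable {w lam}

theorem HasBinaryMarginals.le_insert (hw : HasBinaryMarginals w lam) (hlam : 0 ≤ lam)
    (S : Finset O) (o : O) : w S ≤ w (insert o S) := by
  by_cases ho : o ∈ S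
  · rw [insert_eq_of_mem ho]
  · rcases hw S o ho with h | h <;> linarith

theorem HasBinaryMarginals.mono (hw : HasBinaryMarginals w lam) (hlam : 0 ≤ lam)
    {S T : Finset O} (hST : S ⊆ T) : w S ≤ w T := by
  suffices ∀ U : Finset O, w S ≤ w (S ∪ U) by simpa [union_eq_right.2 hST] using this T
  intro U
  induction U using Finset.induction_on with
  | empty => simp
  | insert a U _ ih => rw [union_insert]; exact ih.trans (hw.le_insert hlam _ a)

theorem HasBinaryMarginals.le_mul_card (hw : HasBinaryMarginals w lam) (hlam : 0 ≤ lam)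
    (h0 : w ∅ = 0) (S : Finset O) : w S ≤ lam * #S := by
  induction S using Finset.induction_on with
  | empty => simp [h0]
  | insert a S ha ih =>
    rw [card_insert_of_notMem ha, Nat.cast_succ]
    rcases hw S a ha with h | h <;> nlinarith

theorem HasBinaryMarginals.eq_of_pos (hw : HasBinaryMarginals w lam) {S : Finset O} {o : O}
    (ho : o ∉ S) (hpos : 0 < w (insert o S) - w S) : w (insert o S) - w S = lam :=
  (hw S o ho).resolve_left hpos.ne'

theorem IsSubmodular.isCleanBundle_of_subset (hw : IsSubmodular w) {S A : Finset O}
    (hA : IsCleanBundle w A) (hSA : S ⊆ A) : IsCleanBundle w S := by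
  intro o ho
  have h := hw (S \ {o}) (A \ {o}) (sdiff_subset_sdiff hSA le_rfl) o (by simp)
  rw [insert_sdiff_self_of_mem (hSA ho), insert_sdiff_self_of_mem ho] at h
  linarith [hA o (hSA ho)]

theorem HasBinaryMarginals.sub_sdiff_singleton_eq (hw : HasBinaryMarginals w lam)
    {S : Finset O} (hS : IsCleanBundle w S) {o : O} (ho : o ∈ S) :
    w S - w (S \ {o}) = lam := by
  have h := hw.eq_of_pos (S := S \ {o}) (o := o) (by simp)
  rw [insert_sdiff_self_of_mem ho] at h
  exact h (hS o ho)

theorem HasBinaryMarginals.eq_mul_card_of_isCleanBundle (hw : HasBinaryMarginals w lam)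
    (hsub : IsSubmodular w) (h0 : w ∅ = 0) {S : Finset O} (hS : IsCleanBundle w S) :
    w S = lam * #S := by
  induction S using Finset.induction_on with
  | empty => simp [h0]
  | insert a S ha ih =>
    have hstep := hw.sub_sdiff_singleton_eq hS (mem_insert_self a S)
    rw [← erase_eq, erase_insert ha] at hstep
    have hval := ih (hsub.isCleanBundle_of_subset hS (subset_insert a S))
    rw [card_insert_of_notMem ha, Nat.cast_succ]
    linarith

theorem IsSubmodular.sub_le_sum_marginal (hw : IsSubmodular w) (S U : Finset O) :
    w (S ∪ U) - w S ≤ ∑ o ∈ U, (w (insert o S) - w S) := by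
  induction U using Finset.induction_on with
  | empty => simp
  | insert a U ha ih =>
    rw [sum_insert ha, union_insert]
    by_cases haS : a ∈ S ∪ U
    · have haS' : a ∈ S := by simpa [ha] using haS
      rw [insert_eq_of_mem haS, insert_eq_of_mem haS']
      linarith
    · have := hw S (S ∪ U) subset_union_left a haS
      linarith

theorem IsSubmodular.exists_marginal_eq_of_lt (hw : IsSubmodular w)
    (hbin : HasBinaryMarginals w lam) (hlam : 0 ≤ lam) {S T : Finset O} (hST : w S < w T) :
    ∃ o ∈ T, o ∉ S ∧ w (insert o S) = w S + lam := by
  obtain ⟨o, hoT, hpos⟩ : ∃ o ∈ T, 0 < w (insert o S) - w S := by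
    by_contra! h
    have hsum := (hw.sub_le_sum_marginal S T).trans (sum_nonpos h)
    linarith [hbin.mono hlam (subset_union_right (s₁ := S) (s₂ := T))]
  have hoS : o ∉ S := fun hoS => by simp [insert_eq_of_mem hoS] at hpos
  exact ⟨o, hoT, hoS, by linarith [hbin.eq_of_pos hoS hpos]⟩

end Valuation

section Allocation

variable {O : Type*} [DecidableEq O] {n : ℕ}

def moveItem (A : Fin n → Finset O) (o : O) (i j : Fin n) : Fin n → Finset O :=
  Function.update (Function.update A j (A j \ {o})) i (insert o (A i))

variable {A : Fin n → Finset O} {o : O} {i j k : Fin n}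

@[simp]
theorem moveItem_self_left : moveItem A o i j i = insert o (A i) := by
  simp [moveItem]

theorem moveItem_right (hij : i ≠ j) : moveItem A o i j j = A j \ {o} := by
  simp [moveItem, hij.symm]

theorem moveItem_of_ne (hki : k ≠ i) (hkj : k ≠ j) : moveItem A o i j k = A k := by
  simp [moveItem, hki, hkj]

theorem isAlloc_moveItem (hA : IsAlloc A) (ho : o ∈ A j) (hij : i ≠ j) :
    IsAlloc (moveItem A o i j) := by
  have hsub : ∀ k, k ≠ i → moveItem A o i j k ⊆ A k \ {o} := by
    intro k hki
    by_cases hkj : k = j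
    · subst hkj; rw [moveItem_right hij]
    · rw [moveItem_of_ne hki hkj]
      intro x hx
      have hxo : x ≠ o := by rintro rfl; exact disjoint_left.1 (hA k j hkj) hx ho
      simp [hx, hxo]
  have hleft : ∀ k, k ≠ i → Disjoint (moveItem A o i j i) (moveItem A o i j k) := by
    intro k hki
    rw [moveItem_self_left]
    refine (disjoint_insert_left.2 ⟨by simp, ?_⟩).mono_right (hsub k hki)
    exact (hA i k (Ne.symm hki)).mono_right sdiff_subset
  intro k l hkl
  by_cases hk : k = i
  · subst hk; exact hleft l (Ne.symm hkl)
  by_cases hl : l = i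
  · subst hl; exact (hleft k hk).symm
  exact (hA k l hkl).mono ((hsub k hk).trans sdiff_subset) ((hsub l hl).trans sdiff_subset)

end Allocation

theorem prod_eq_mul_mul_prod_sdiff_pair {ι M : Type*} [CommMonoid M] [DecidableEq ι]
    {s : Finset ι} {i j : ι} (hi : i ∈ s) (hj : j ∈ s) (hij : i ≠ j) (f : ι → M) :
    ∏ k ∈ s, f k = f i * f j * ∏ k ∈ s \ {i, j}, f k := by
  rw [← prod_sdiff (insert_subset hi (singleton_subset_iff.2 hj)), prod_pair hij, mul_comm]

theorem IsMNW.mul_le_of_eq_off_pair {O : Type*} [DecidableEq O] {n : ℕ}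
    {v : Fin n → Finset O → ℝ} {A B : Fin n → Finset O} (hA : IsMNW v A) (hB : IsAlloc B)
    {i j : Fin n} (hij : i ≠ j) (hrest : ∀ k, k ≠ i → k ≠ j → B k = A k)
    (hAj : 0 < v j (A j)) (hBi : 0 < v i (B i)) (hBj : 0 < v j (B j)) :
    v i (B i) * v j (B j) ≤ v i (A i) * v j (A j) := by
  have hsub : posAgents v A ⊆ posAgents v B := by
    intro k hk
    simp only [posAgents, mem_filter, mem_univ, true_and] at hk ⊢
    by_cases hki : k = i
    · subst hki; exact hBi
    by_cases hkj : k = j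
    · subst hkj; exact hBj
    rwa [hrest k hki hkj]
  -- no allocation has more agents with positive value, so `B` has exactly those of `A`
  have hP : posAgents v A = posAgents v B := eq_of_subset_of_card_le hsub (hA.2.1 B hB)
  have hi : i ∈ posAgents v A := hP ▸ by simp [posAgents, hBi]
  have hj : j ∈ posAgents v A := by simp [posAgents, hAj]
  have hprod := hA.2.2 B hB (congrArg card hP.symm)
  rw [← hP, prod_eq_mul_mul_prod_sdiff_pair hi hj hij, prod_eq_mul_mul_prod_sdiff_pair hi hj hij,
    prod_congr rfl fun k hk => by rw [hrest k (by grind) (by grind)]] at hprod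
  have hpos : 0 < ∏ k ∈ posAgents v A \ {i, j}, v k (A k) :=
    prod_pos fun k hk => by simpa [posAgents] using (mem_sdiff.1 hk).1
  exact le_of_mul_le_mul_right hprod hpos

theorem subjective_binary_clean_MNW_EF1_general
    {O : Type*} [DecidableEq O] {n : ℕ}
    (v : Fin n → Finset O → ℝ) (lam : Fin n → ℝ)
    (hlam : ∀ i, 0 < lam i)
    (h0 : ∀ i, v i ∅ = 0)
    (hbin : ∀ i (S : Finset O) (o : O), o ∉ S →
      v i (insert o S) - v i S = 0 ∨ v i (insert o S) - v i S = lam i)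
    (hsub : ∀ i (S T : Finset O), S ⊆ T → ∀ o ∉ T,
      v i (insert o T) - v i T ≤ v i (insert o S) - v i S)
    (A : Fin n → Finset O)
    (hclean : IsClean v A)
    (hmnw : IsMNW v A) :
    EF1 v A := by
  replace hbin : ∀ i, HasBinaryMarginals (v i) (lam i) := hbin
  replace hsub : ∀ i, IsSubmodular (v i) := hsub
  intro i j
  by_contra! hcon
  obtain ⟨henvy, hall⟩ := hcon
  have hij : i ≠ j := by rintro rfl; exact lt_irrefl _ henvy
  obtain ⟨o, hoj, -, hgain⟩ := (hsub i).exists_marginal_eq_of_lt (hbin i) (hlam i).le henvy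
  set k : ℕ := #(A j \ {o})
  have hAi : 0 ≤ v i (A i) := h0 i ▸ (hbin i).mono (hlam i).le (empty_subset _)
  have hlt : v i (A i) < lam i * k :=
    (hall o hoj).trans_le ((hbin i).le_mul_card (hlam i).le (h0 i) _)
  have hk : (0 : ℝ) < k := pos_of_mul_pos_right (hAi.trans_lt hlt) (hlam i).le
  have hBj : v j (A j \ {o}) = lam j * k := (hbin j).eq_mul_card_of_isCleanBundle (hsub j) (h0 j)
    ((hsub j).isCleanBundle_of_subset (hclean j) sdiff_subset)
  have hAj : v j (A j) - v j (A j \ {o}) = lam j := (hbin j).sub_sdiff_singleton_eq (hclean j) hoj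
  have hle := hmnw.mul_le_of_eq_off_pair (isAlloc_moveItem hmnw.1 hoj hij) hij
    (fun _ hki hkj => moveItem_of_ne hki hkj) (by nlinarith [hlam j])
    (by rw [moveItem_self_left, hgain]; linarith [hlam i])
    (by rw [moveItem_right hij, hBj]; nlinarith [hlam j])
  rw [moveItem_self_left, moveItem_right hij, hgain, hBj] at hle
  nlinarith [mul_lt_mul_of_pos_right hlt (hlam j)]

/-- For submodular valuations with subjective binary marginal
gains, every clean MNW allocation is EF1. -/
theorem subjective_binary_clean_MNW_EF1
    {O : Type*} [DecidableEq O] [Fintype O] {n : ℕ}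
    (v : Fin n → Finset O → ℝ) (lam : Fin n → ℝ)
    (hlam : ∀ i, 0 < lam i)
    (h0 : ∀ i, v i ∅ = 0)
    (hbin : ∀ i (S : Finset O) (o : O), o ∉ S →
      v i (insert o S) - v i S = 0 ∨ v i (insert o S) - v i S = lam i)
    (hsub : ∀ i (S T : Finset O), S ⊆ T → ∀ o ∉ T,
      v i (insert o T) - v i T ≤ v i (insert o S) - v i S)
    (A : Fin n → Finset O)
    (hclean : IsClean v A)
    (hmnw : IsMNW v A) :
    EF1 v A :=
  subjective_binary_clean_MNW_EF1_general v lam hlam h0 hbin hsub A hclean hmnw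
end

section
/- Suppose each of n agents has a nonnegative submodular valuation v_i on subsets of a finite set O of items with v_i(∅) = 0. If an allocation A is Pareto optimal and envy-free up to one good (EF1), then A is weakly proportional up to one item (WPROP1): for every agent i with O∖A_i ≠ ∅, n·v_i(A_i) ≥ v_i(O) − n·max_{o ∈ O∖A_i} v_i({o}). -/
/-- `B` Pareto dominates `A`. -/
def ParetoDom {O : Type*} {n : ℕ} (v : Fin n → Finset O → ℝ)
    (B A : Fin n → Finset O) : Prop :=
  (∀ i, v i (A i) ≤ v i (B i)) ∧ ∃ j, v j (A j) < v j (B j)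

/-- Key submodularity consequence. -/
lemma subL {O : Type*} [DecidableEq O] (v : Finset O → ℝ)
    (hsub : ∀ (S T : Finset O), S ⊆ T → ∀ o ∉ T,
      v (insert o T) - v T ≤ v (insert o S) - v S) :
    ∀ (U S T : Finset O), S ⊆ T → Disjoint U T → v (T ∪ U) - v T ≤ v (S ∪ U) - v S := by
  intro U
  induction U using Finset.induction_on with
  | empty => intro S T h _; simp
  | @insert a U ha IH =>
    intro S T hST hD
    have haT : a ∉ T := by
      have := Finset.disjoint_left.mp hD (Finset.mem_insert_self a U); exact this
    have hDU : Disjoint U T := hD.mono_left (Finset.subset_insert a U)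
    have haU : a ∉ T ∪ U := by
      simp only [Finset.mem_union]; push_neg; exact ⟨haT, ha⟩
    have hST' : S ∪ U ⊆ T ∪ U := Finset.union_subset_union hST (subset_refl U)
    have key := hsub (S ∪ U) (T ∪ U) hST' a haU
    have IH' := IH S T hST hDU
    have e1 : T ∪ insert a U = insert a (T ∪ U) := by
      ext x; simp [Finset.mem_union, Finset.mem_insert]
    have e2 : S ∪ insert a U = insert a (S ∪ U) := by
      ext x; simp [Finset.mem_union, Finset.mem_insert]
    rw [e1, e2]
    linarith

lemma disjSubadd {O : Type*} [DecidableEq O] (v : Finset O → ℝ)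
    (h0 : v ∅ = 0)
    (hsub : ∀ (S T : Finset O), S ⊆ T → ∀ o ∉ T,
      v (insert o T) - v T ≤ v (insert o S) - v S)
    (X Y : Finset O) (h : Disjoint X Y) : v (X ∪ Y) ≤ v X + v Y := by
  have := subL v hsub Y ∅ X (Finset.empty_subset X) h.symm
  simp [h0] at this
  linarith


/-- For nonnegative submodular valuations, every Pareto
optimal and EF1 allocation is weakly proportional up to one item (WPROP1). -/
theorem paretoOpt_EF1_implies_WPROP1
    {O : Type*} [DecidableEq O] [Fintype O] {n : ℕ}
    (v : Fin n → Finset O → ℝ)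
    (h0 : ∀ i, v i ∅ = 0)
    (hnonneg : ∀ i (S : Finset O), 0 ≤ v i S)
    (hsub : ∀ i (S T : Finset O), S ⊆ T → ∀ o ∉ T,
      v i (insert o T) - v i T ≤ v i (insert o S) - v i S)
    (A : Fin n → Finset O)
    (hA : IsAlloc A)
    (hPO : ¬ ∃ B : Fin n → Finset O, IsAlloc B ∧ ParetoDom v B A)
    (hEF1 : EF1 v A) :
    ∀ i : Fin n, ∀ hne : (Finset.univ \ A i).Nonempty,
      v i Finset.univ - (n : ℝ) * (Finset.univ \ A i).sup' hne (fun o => v i {o})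
        ≤ (n : ℝ) * v i (A i) := by
  intro i hne
  set M : ℝ := (Finset.univ \ A i).sup' hne (fun o => v i {o}) with hM
  have hMnn : 0 ≤ M := by
    obtain ⟨o, ho⟩ := hne
    rw [hM]
    exact le_trans (hnonneg i {o}) (Finset.le_sup' (fun o => v i {o}) ho)
  -- unallocated items
  set R : Finset O := Finset.univ \ Finset.univ.biUnion A with hR
  -- Pareto optimality: giving R to i doesn't help
  have hRA : ∀ k, Disjoint R (A k) := by
    intro k
    refine Finset.disjoint_left.mpr ?_
    intro x hx hxk
    exact (Finset.mem_sdiff.mp hx).2 (Finset.mem_biUnion.mpr ⟨k, Finset.mem_univ k, hxk⟩)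
  have hPOi : v i (A i ∪ R) ≤ v i (A i) := by
    by_contra hlt
    push_neg at hlt
    apply hPO
    refine ⟨Function.update A i (A i ∪ R), ?_, ?_, ⟨i, ?_⟩⟩
    · intro j k hjk
      rcases eq_or_ne j i with hji | hj
      · rcases eq_or_ne k i with hki | hk
        · exact absurd (hji.trans hki.symm) hjk
        · rw [hji, Function.update_self, Function.update_of_ne hk]
          exact Finset.disjoint_union_left.mpr ⟨hA i k (hji ▸ hjk), hRA k⟩
      · rcases eq_or_ne k i with hki | hk
        · rw [hki, Function.update_self, Function.update_of_ne hj]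
          exact (Finset.disjoint_union_left.mpr ⟨hA i j (hki ▸ hjk.symm), hRA j⟩).symm
        · rw [Function.update_of_ne hj, Function.update_of_ne hk]
          exact hA j k hjk
    · intro l
      rcases eq_or_ne l i with hli | hl
      · rw [hli, Function.update_self]; exact le_of_lt (hli ▸ hlt)
      · rw [Function.update_of_ne hl]
    · rw [Function.update_self]; exact hlt
  -- EF1 bound for each j ≠ i
  have hEach : ∀ j : Fin n, j ≠ i → v i (A j) ≤ v i (A i) + M := by
    intro j hj
    rcases hEF1 i j with h | ⟨o, ho, hle⟩
    · linarith
    · have hoAi : o ∉ A i := Finset.disjoint_left.mp (hA j i hj) ho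
      have hoM : v i {o} ≤ M := by
        rw [hM]
        exact Finset.le_sup' (fun o => v i {o}) (Finset.mem_sdiff.mpr ⟨Finset.mem_univ o, hoAi⟩)
      have hsplit : A j = (A j \ {o}) ∪ {o} :=
        (Finset.sdiff_union_of_subset (Finset.singleton_subset_iff.mpr ho)).symm
      have hd : Disjoint (A j \ {o}) ({o} : Finset O) := by
        simp [Finset.disjoint_singleton_right]
      have := disjSubadd (v i) (h0 i) (hsub i) (A j \ {o}) {o} hd
      rw [← hsplit] at this
      linarith
  -- univ = (A i ∪ R) ∪ biUnion over others
  have hcover : (Finset.univ : Finset O) = (A i ∪ R) ∪ (Finset.univ.erase i).biUnion A := by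
    refine (Finset.eq_univ_of_forall ?_).symm
    intro x
    by_cases hx : x ∈ Finset.univ.biUnion A
    · obtain ⟨j, _, hxj⟩ := Finset.mem_biUnion.mp hx
      by_cases hji : j = i
      · exact Finset.mem_union_left _ (Finset.mem_union_left _ (hji ▸ hxj))
      · exact Finset.mem_union_right _
          (Finset.mem_biUnion.mpr ⟨j, Finset.mem_erase.mpr ⟨hji, Finset.mem_univ j⟩, hxj⟩)
    · have hxR : x ∈ R := by
        rw [hR]; exact Finset.mem_sdiff.mpr ⟨Finset.mem_univ x, hx⟩
      exact Finset.mem_union_left _ (Finset.mem_union_right _ hxR)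
  -- subadditivity over the pieces: v i univ ≤ v i (A i ∪ R) + ∑ over others
  have hsum : ∀ (s : Finset (Fin n)), i ∉ s →
      v i ((A i ∪ R) ∪ s.biUnion A) ≤ v i (A i ∪ R) + ∑ j ∈ s, v i (A j) := by
    intro s
    induction s using Finset.induction_on with
    | empty => simp
    | @insert j s hjs IH =>
      intro his
      have hij : i ≠ j := fun h => his (h ▸ Finset.mem_insert_self j s)
      have his' : i ∉ s := fun h => his (Finset.mem_insert_of_mem h)
      have e : (insert j s).biUnion A = s.biUnion A ∪ A j := by
        rw [Finset.biUnion_insert, Finset.union_comm]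
      rw [e, ← Finset.union_assoc]
      have hd : Disjoint ((A i ∪ R) ∪ s.biUnion A) (A j) := by
        refine Finset.disjoint_union_left.mpr ⟨Finset.disjoint_union_left.mpr ⟨hA i j hij, ?_⟩, ?_⟩
        · refine Finset.disjoint_left.mpr ?_
          intro x hx hxj
          exact (Finset.mem_sdiff.mp hx).2 (Finset.mem_biUnion.mpr ⟨j, Finset.mem_univ j, hxj⟩)
        · refine Finset.disjoint_left.mpr ?_
          intro x hx hxj
          obtain ⟨k, hks, hxk⟩ := Finset.mem_biUnion.mp hx
          have hkj : k ≠ j := fun h => hjs (h ▸ hks)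
          exact Finset.disjoint_left.mp (hA k j hkj) hxk hxj
      have h1 := disjSubadd (v i) (h0 i) (hsub i) ((A i ∪ R) ∪ s.biUnion A) (A j) hd
      have h2 := IH his'
      rw [Finset.sum_insert hjs]
      linarith
  have huniv : v i Finset.univ ≤ v i (A i ∪ R) + ∑ j ∈ Finset.univ.erase i, v i (A j) := by
    rw [hcover]
    exact hsum _ (Finset.notMem_erase i Finset.univ)
  -- bound the sum
  have hsumb : ∑ j ∈ Finset.univ.erase i, v i (A j) ≤ ((n : ℝ) - 1) * (v i (A i) + M) := by
    have hcard : (Finset.univ.erase i).card = n - 1 := by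
      rw [Finset.card_erase_of_mem (Finset.mem_univ i), Finset.card_univ, Fintype.card_fin]
    have hn1 : (1 : ℕ) ≤ n := Nat.one_le_iff_ne_zero.mpr (by rintro rfl; exact i.elim0)
    calc ∑ j ∈ Finset.univ.erase i, v i (A j)
        ≤ (Finset.univ.erase i).card • (v i (A i) + M) :=
          Finset.sum_le_card_nsmul _ _ _ (fun j hj => hEach j (Finset.ne_of_mem_erase hj))
      _ = ((n : ℝ) - 1) * (v i (A i) + M) := by
          rw [hcard, nsmul_eq_mul, Nat.cast_sub hn1]; norm_num
  have hn1 : (1 : ℝ) ≤ (n : ℝ) := by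
    have : (1 : ℕ) ≤ n := Nat.one_le_iff_ne_zero.mpr (by rintro rfl; exact i.elim0)
    exact_mod_cast this
  have hvnn := hnonneg i (A i)
  nlinarith [huniv, hsumb, hPOi, hMnn, hvnn]
end
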